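/- arXiv:0902.1143 — 2 statements merged into one kernel-verified Lean document; each statement's English description precedes it below -/
import Mathlib

section
/- For a profinite abelian group H and the discrete torsion group T = ℚ/ℤ, every homomorphism Hom_cont(H, ℚ/ℤ) → ℚ/ℤ of abelian groups that is continuous for the discrete topology on targets arises by evaluation at a unique element of H. -/
open AddCircle

local notation "T" => AddCircle (1 : ℚ)

lemma tors {n : ℕ} (hn : 0 < n) {u : T} (hu : n • u = 0) :
    ∃ k : ℕ, u = k • ((((n : ℚ))⁻¹ : ℚ) : T) := by
  have hfin : IsOfFinAddOrder u := isOfFinAddOrder_iff_nsmul_eq_zero.mpr ⟨n, hn, hu⟩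
  have hd : addOrderOf u ∣ n := addOrderOf_dvd_of_nsmul_eq_zero hu
  set d := addOrderOf u with hdef
  obtain ⟨m, hg, hm, he⟩ := exists_gcd_eq_one_of_isOfFinAddOrder (p := (1:ℚ)) hfin
  have hdpos : 0 < d := hfin.addOrderOf_pos
  refine ⟨m * (n / d), ?_⟩
  have hdn : ((d : ℚ)) ≠ 0 := by positivity
  have hnn : ((n : ℚ)) ≠ 0 := by positivity
  have hcast : ((n / d : ℕ) : ℚ) = (n : ℚ) / (d : ℚ) := Nat.cast_div hd hdn
  have key : ((m * (n / d) : ℕ) : ℚ) * ((n : ℚ))⁻¹ = (m : ℚ) / (d : ℚ) * 1 := by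
    push_cast [hcast]
    field_simp
  rw [← he, ← AddCircle.coe_nsmul, nsmul_eq_mul, key]

lemma hasEnough (n : ℕ) [NeZero n] :
    HasEnoughRootsOfUnity (Multiplicative T) n := by
  have hn : 0 < n := Nat.pos_of_ne_zero (NeZero.ne n)
  set ζ₀ : T := ((((n : ℚ))⁻¹ : ℚ) : T) with hζ₀
  have hord : addOrderOf ζ₀ = n := by
    have := AddCircle.addOrderOf_period_div (p := (1:ℚ)) hn
    simpa [one_div] using this
  have hpow : ∀ m : ℕ, (Multiplicative.ofAdd ζ₀) ^ m = Multiplicative.ofAdd (m • ζ₀) :=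
    fun m => (ofAdd_nsmul m ζ₀).symm
  constructor
  · refine ⟨Multiplicative.ofAdd ζ₀, ?_⟩
    have : orderOf (Multiplicative.ofAdd ζ₀) = n := by
      rw [orderOf_ofAdd_eq_addOrderOf, hord]
    exact this ▸ IsPrimitiveRoot.orderOf _
  · -- cyclicity of the n-th roots of unity
    have hζn : (Multiplicative.ofAdd ζ₀) ^ n = 1 := by
      rw [hpow]
      have : n • ζ₀ = 0 := by rw [← hord]; exact addOrderOf_nsmul_eq_zero ζ₀
      rw [this]; rfl
    set g : (Multiplicative T)ˣ := toUnits (Multiplicative.ofAdd ζ₀) with hg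
    have hgmem : g ∈ rootsOfUnity n (Multiplicative T) := by
      rw [mem_rootsOfUnity]
      ext
      simp only [Units.val_pow_eq_pow_val, Units.val_one]
      rw [show (g : Multiplicative T) = Multiplicative.ofAdd ζ₀ from rfl, hζn]
    refine ⟨⟨⟨g, hgmem⟩, fun x => ?_⟩⟩
    have hx : ((x : (Multiplicative T)ˣ) : Multiplicative T) ^ n = 1 :=
      (mem_rootsOfUnity' n _).mp x.2
    have hx' : n • Multiplicative.toAdd ((x : (Multiplicative T)ˣ) : Multiplicative T) = 0 := by
      rw [← toAdd_pow, hx]; rfl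
    obtain ⟨k, hk⟩ := tors hn hx'
    refine Subgroup.mem_zpowers_iff.mpr ⟨k, ?_⟩
    have : g ^ (k : ℤ) = g ^ k := zpow_natCast g k
    refine Subtype.ext ?_
    show g ^ (k : ℤ) = _
    rw [this]
    refine Units.ext ?_
    have : (g : Multiplicative T) = Multiplicative.ofAdd ζ₀ := rfl
    rw [Units.val_pow_eq_pow_val, this, hpow]
    apply Multiplicative.toAdd.injective
    simp only [toAdd_ofAdd]
    exact hk.symm

section FiniteDual

variable (F : Type) [AddCommGroup F] [Finite F]

lemma exists_char {a : F} (ha : a ≠ 0) : ∃ χ : F →+ T, χ a ≠ 0 := by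
  haveI : NeZero (Monoid.exponent (Multiplicative F)) :=
    ⟨Monoid.exponent_ne_zero_of_finite⟩
  haveI := hasEnough (Monoid.exponent (Multiplicative F))
  have ha' : (Multiplicative.ofAdd a : Multiplicative F) ≠ 1 := ha
  obtain ⟨φ, hφ⟩ := CommGroup.exists_apply_ne_one_of_hasEnoughRootsOfUnity
    (Multiplicative F) (Multiplicative T) ha'
  refine ⟨MonoidHom.toAdditive ((Units.coeHom (Multiplicative T)).comp φ), ?_⟩
  simp only [MonoidHom.toAdditive]
  intro h
  apply hφ
  apply Units.ext
  exact h

lemma dual_equiv : Nonempty ((F →+ T) ≃ F) := by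
  haveI : NeZero (Monoid.exponent (Multiplicative F)) :=
    ⟨Monoid.exponent_ne_zero_of_finite⟩
  haveI := hasEnough (Monoid.exponent (Multiplicative F))
  obtain ⟨e⟩ := CommGroup.monoidHom_mulEquiv_of_hasEnoughRootsOfUnity
    (Multiplicative F) (Multiplicative T)
  exact ⟨(AddMonoidHom.toMultiplicative.trans
    ((MulEquiv.monoidHomCongrRight
      (toUnits (G := Multiplicative T))).toEquiv.trans
        (e.toEquiv.trans Multiplicative.toAdd))).symm.symm⟩

lemma dual_finite : Finite (F →+ T) := by
  obtain ⟨e⟩ := dual_equiv F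
  exact Finite.of_equiv F e.symm

lemma dual_card : Nat.card (F →+ T) = Nat.card F := by
  obtain ⟨e⟩ := dual_equiv F
  exact Nat.card_congr e

lemma finite_double_dual (lam : (F →+ T) →+ T) : ∃ x : F, ∀ χ : F →+ T, lam χ = χ x := by
  haveI := dual_finite F
  let ev : F → ((F →+ T) →+ T) := fun x =>
    AddMonoidHom.mk' (fun χ => χ x) (fun χ₁ χ₂ => rfl)
  have hinj : Function.Injective ev := by
    intro x y hxy
    by_contra hne
    obtain ⟨χ, hχ⟩ := exists_char F (a := x - y) (sub_ne_zero.mpr hne)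
    apply hχ
    have : χ x = χ y := congrArg (fun f : (F →+ T) →+ T => f χ) hxy
    rw [map_sub, this, sub_self]
  have hcard : Nat.card F = Nat.card ((F →+ T) →+ T) := by
    rw [dual_card (F →+ T), dual_card F]
  haveI := dual_finite (F →+ T)
  have hbij : Function.Bijective ev :=
    (Nat.bijective_iff_injective_and_card ev).mpr ⟨hinj, hcard⟩
  obtain ⟨x, hx⟩ := hbij.2 lam
  exact ⟨x, fun χ => by rw [← hx]; rfl⟩

end FiniteDual

section Main

variable {H : Type} [AddCommGroup H] [TopologicalSpace H] [IsTopologicalAddGroup H]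
    [CompactSpace H] [TotallyDisconnectedSpace H] [T2Space H]

omit [CompactSpace H] [TotallyDisconnectedSpace H] [T2Space H] in
lemma closed_fiber {φ : H →+ T} (h : IsOpen (φ.ker : Set H)) (c : T) :
    IsClosed {τ : H | φ τ = c} := by
  rw [← isOpen_compl_iff, isOpen_iff_mem_nhds]
  intro τ₀ hτ₀
  have hcont : Continuous (fun x : H => x - τ₀) := continuous_id.sub continuous_const
  have hopen : IsOpen ((fun x : H => x - τ₀) ⁻¹' (φ.ker : Set H)) := h.preimage hcont
  have hmem : τ₀ ∈ (fun x : H => x - τ₀) ⁻¹' (φ.ker : Set H) := by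
    simp [AddMonoidHom.mem_ker]
  refine Filter.mem_of_superset (hopen.mem_nhds hmem) ?_
  intro x hx
  simp only [Set.mem_preimage, SetLike.mem_coe, AddMonoidHom.mem_ker, map_sub,
    sub_eq_zero] at hx
  simpa [Set.mem_compl_iff, Set.mem_setOf_eq, hx] using hτ₀

lemma exists_openAddSubgroup_not_mem {a : H} (ha : a ≠ 0) :
    ∃ U : OpenAddSubgroup H, a ∉ (U : Set H) := by
  have hopen : IsOpen ({a}ᶜ : Set H) := isOpen_compl_singleton
  have h0 : (0 : H) ∈ ({a}ᶜ : Set H) := by simp [Ne.symm ha]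
  obtain ⟨V, hVclopen, h0V, hVsub⟩ := compact_exists_isClopen_in_isOpen hopen h0
  obtain ⟨U, hU⟩ :=
    IsTopologicalAddGroup.exist_openAddSubgroup_sub_clopen_nhds_of_zero hVclopen h0V
  exact ⟨U, fun hx => (hVsub (hU hx)) rfl⟩

end Main

/-- Pontryagin duality for profinite abelian groups: for a profinite abelian group `H` and
the discrete torsion group `ℚ/ℤ`, every additive map from the group of continuous
characters `Hom_cont(H, ℚ/ℤ)` (homomorphisms with open kernel, i.e. continuous for the
discrete topology on `ℚ/ℤ`) to `ℚ/ℤ` arises by evaluation at a unique element of `H`. -/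
theorem stmt_5 (H : Type) [AddCommGroup H] [TopologicalSpace H] [IsTopologicalAddGroup H]
    [CompactSpace H] [TotallyDisconnectedSpace H] [T2Space H]
    (ψ : (H →+ AddCircle (1 : ℚ)) → AddCircle (1 : ℚ))
    (hadd : ∀ φ₁ φ₂ : H →+ AddCircle (1 : ℚ),
      IsOpen (φ₁.ker : Set H) → IsOpen (φ₂.ker : Set H) → ψ (φ₁ + φ₂) = ψ φ₁ + ψ φ₂) :
    ∃! τ : H, ∀ φ : H →+ AddCircle (1 : ℚ), IsOpen (φ.ker : Set H) → ψ φ = φ τ := by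
  classical
  -- the closed sets
  set S : OpenAddSubgroup H → Set H := fun U =>
    {τ : H | ∀ φ : H →+ T, (U : AddSubgroup H) ≤ φ.ker → φ τ = ψ φ} with hS
  have hker_open : ∀ (U : OpenAddSubgroup H) (φ : H →+ T),
      (U : AddSubgroup H) ≤ φ.ker → IsOpen (φ.ker : Set H) := fun U φ h =>
    AddSubgroup.isOpen_mono h U.isOpen
  have hSclosed : ∀ U, IsClosed (S U) := by
    intro U
    have : S U = ⋂ (φ : H →+ T) (_ : (U : AddSubgroup H) ≤ φ.ker), {τ : H | φ τ = ψ φ} := by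
      ext τ; simp [hS, Set.mem_iInter]
    rw [this]
    exact isClosed_iInter fun φ => isClosed_iInter fun h => closed_fiber (hker_open U φ h) _
  have hSdir : Directed (· ⊇ ·) S := by
    intro U V
    refine ⟨U ⊓ V, fun τ hτ φ hle => hτ φ (le_trans inf_le_left hle), 
      fun τ hτ φ hle => hτ φ (le_trans inf_le_right hle)⟩
  have hSne : ∀ U, (S U).Nonempty := by
    intro U
    haveI : Finite (H ⧸ (U : AddSubgroup H)) :=
      AddSubgroup.quotient_finite_of_isOpen _ U.isOpen
    set mk := QuotientAddGroup.mk' (U : AddSubgroup H) with hmk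
    have hUker : ∀ χ : (H ⧸ (U : AddSubgroup H)) →+ T,
        (U : AddSubgroup H) ≤ (χ.comp mk).ker := by
      intro χ x hx
      have : mk x = 0 := (QuotientAddGroup.eq_zero_iff x).mpr hx
      simp [AddMonoidHom.mem_ker, AddMonoidHom.comp_apply, this]
    have hψ0 : ψ 0 = 0 := by
      have h0 : IsOpen (((0 : H →+ T)).ker : Set H) := by
        have : ((0 : H →+ T)).ker = ⊤ := by ext x; simp [AddMonoidHom.mem_ker]
        rw [this]; exact isOpen_univ
      have := hadd 0 0 h0 h0
      simpa using this.symm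
    let lam : ((H ⧸ (U : AddSubgroup H)) →+ T) →+ T :=
      AddMonoidHom.mk' (fun χ => ψ (χ.comp mk)) (by
        intro χ₁ χ₂
        show ψ ((χ₁ + χ₂).comp mk) = ψ (χ₁.comp mk) + ψ (χ₂.comp mk)
        have hcomp : (χ₁ + χ₂).comp mk = χ₁.comp mk + χ₂.comp mk :=
          AddMonoidHom.add_comp χ₁ χ₂ mk
        rw [hcomp]
        exact hadd _ _ (hker_open U _ (hUker χ₁)) (hker_open U _ (hUker χ₂)))
    obtain ⟨x, hx⟩ := finite_double_dual (H ⧸ (U : AddSubgroup H)) lam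
    obtain ⟨τ₀, hτ₀⟩ := QuotientAddGroup.mk'_surjective (U : AddSubgroup H) x
    refine ⟨τ₀, ?_⟩
    intro φ hle
    have hker : ∀ x ∈ (U : AddSubgroup H), φ x = 0 := fun x hx => hle hx
    set χ := QuotientAddGroup.lift (U : AddSubgroup H) φ hker with hχ
    have hχcomp : χ.comp mk = φ := by
      ext y; rfl
    have h1 : φ τ₀ = χ x := by rw [← hτ₀, ← hχcomp]; rfl
    have h2 : lam χ = χ x := hx χ
    have h3 : lam χ = ψ φ := by simp only [lam, AddMonoidHom.mk'_apply, hχcomp]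
    rw [h1, ← h2, h3]
  have hScompact : ∀ U, IsCompact (S U) := fun U => (hSclosed U).isCompact
  haveI : Nonempty (OpenAddSubgroup H) := ⟨⊤⟩
  obtain ⟨τ, hτ⟩ :=
    IsCompact.nonempty_iInter_of_directed_nonempty_isCompact_isClosed S hSdir hSne hScompact hSclosed
  have hτ' : ∀ φ : H →+ T, IsOpen (φ.ker : Set H) → ψ φ = φ τ := by
    intro φ hφ
    have : τ ∈ S ⟨φ.ker, hφ⟩ := Set.mem_iInter.mp hτ ⟨φ.ker, hφ⟩
    exact (this φ le_rfl).symm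
  refine ⟨τ, hτ', ?_⟩
  intro y hy
  by_contra hne
  obtain ⟨U, hU⟩ := exists_openAddSubgroup_not_mem (a := y - τ) (sub_ne_zero.mpr hne)
  haveI : Finite (H ⧸ (U : AddSubgroup H)) :=
    AddSubgroup.quotient_finite_of_isOpen _ U.isOpen
  have hmkne : (QuotientAddGroup.mk' (U : AddSubgroup H)) (y - τ) ≠ 0 := by
    intro h
    exact hU ((QuotientAddGroup.eq_zero_iff _).mp h)
  obtain ⟨χ, hχ⟩ := exists_char (H ⧸ (U : AddSubgroup H)) hmkne
  set φ := χ.comp (QuotientAddGroup.mk' (U : AddSubgroup H)) with hφdef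
  have hφopen : IsOpen (φ.ker : Set H) := by
    refine AddSubgroup.isOpen_mono (H₁ := (U : AddSubgroup H)) ?_ U.isOpen
    intro x hx
    have : (QuotientAddGroup.mk' (U : AddSubgroup H)) x = 0 :=
      (QuotientAddGroup.eq_zero_iff x).mpr hx
    simp only [φ, AddMonoidHom.mem_ker, AddMonoidHom.comp_apply, this, map_zero]
  have h1 : ψ φ = φ y := hy φ hφopen
  have h2 : ψ φ = φ τ := hτ' φ hφopen
  apply hχ
  have : φ (y - τ) = 0 := by rw [map_sub, ← h1, ← h2, sub_self]
  simpa [φ] using this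
end

section
/- Let G be a profinite group, and let 1 → N → E → G → 1 be an extension of profinite groups with N abelian. Suppose every element g of G has a unique lift g̃ in E satisfying a fixed compatible family of conditions (namely, agreeing with a prescribed continuous action of G on a dense invariant structure). Then g ↦ g̃ is a continuous splitting of E → G. More concretely: if s : G → E is a map that is a set-theoretic section of E → G, and s is a group homomorphism (by uniqueness of lifts), and the action of E on a discrete faithful module determines s, then s is continuous. -/
/-!
Give `M` the discrete topology. The map `e ↦ (e • ·)` from `E` to `M → M` is continuous and,
by faithfulness, injective; since `E` is compact and `M → M` is Hausdorff it is an embedding.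
So `s` is continuous as soon as `g ↦ (s g • ·)` is, which is exactly the hypothesis on `s`.
-/

section SMulPi

variable {X E M : Type*} [TopologicalSpace X] [TopologicalSpace M] [DiscreteTopology M]
  [SMul E M]

theorem continuous_smul_pi_of_isOpen_setOf_smul_eq {f : X → E}
    (hf : ∀ m m' : M, IsOpen {x | f x • m = m'}) : Continuous fun x (m : M) => f x • m :=
  continuous_pi fun m => continuous_discrete_rng.2 fun m' => hf m m'

theorem isInducing_smul_pi [TopologicalSpace E] [CompactSpace E] [FaithfulSMul E M]
    (hE : ∀ m m' : M, IsOpen {e : E | e • m = m'}) :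
    Topology.IsInducing fun (e : E) (m : M) => e • m :=
  ((continuous_smul_pi_of_isOpen_setOf_smul_eq (f := id) hE).isClosedEmbedding
    fun _ _ h => FaithfulSMul.eq_of_smul_eq_smul (congrFun h)).isInducing

theorem continuous_of_isOpen_setOf_smul_eq [TopologicalSpace E] [CompactSpace E] [FaithfulSMul E M]
    (hE : ∀ m m' : M, IsOpen {e : E | e • m = m'}) {f : X → E}
    (hf : ∀ m m' : M, IsOpen {x | f x • m = m'}) : Continuous f :=
  (isInducing_smul_pi hE).continuous_iff.2 (continuous_smul_pi_of_isOpen_setOf_smul_eq hf)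

end SMulPi

theorem stmt_13_general (G E M : Type) [Group G] [Group E]
    [TopologicalSpace G]
    [TopologicalSpace E] [CompactSpace E]
    [MulAction E M]
    (hfaithful : ∀ e e' : E, (∀ m : M, e • m = e' • m) → e = e')
    (hEcont : ∀ m m' : M, IsOpen {e : E | e • m = m'})
    (s : G →* E)
    (hscont : ∀ m m' : M, IsOpen {g : G | s g • m = m'}) :
    Continuous s := by
  let : TopologicalSpace M := ⊥
  have : DiscreteTopology M := ⟨rfl⟩
  have : FaithfulSMul E M := ⟨hfaithful _ _⟩
  exact continuous_of_isOpen_setOf_smul_eq hEcont hscont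

/-- Continuity of a splitting determined by continuous actions on discrete sets: let
`π : E → G` be a continuous surjection of profinite groups and `s : G → E` a group-theoretic
section of `π`.  If `E` acts faithfully on a set `M`, the action of `E` on `M` is continuous
for the discrete topology on `M`, and the resulting action of `G` on `M` through `s` is also
continuous for the discrete topology, then `s` is continuous. -/
theorem stmt_13 (G E M : Type) [Group G] [Group E]
    [TopologicalSpace G] [IsTopologicalGroup G] [CompactSpace G] [TotallyDisconnectedSpace G]
    [T2Space G]
    [TopologicalSpace E] [IsTopologicalGroup E] [CompactSpace E] [TotallyDisconnectedSpace E]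
    [T2Space E]
    [MulAction E M]
    (hfaithful : ∀ e e' : E, (∀ m : M, e • m = e' • m) → e = e')
    (hEcont : ∀ m m' : M, IsOpen {e : E | e • m = m'})
    (π : E →* G) (hπcont : Continuous π) (hπsurj : Function.Surjective π)
    (s : G →* E) (hsec : ∀ g : G, π (s g) = g)
    (hscont : ∀ m m' : M, IsOpen {g : G | s g • m = m'}) :
    Continuous s :=
  stmt_13_general G E M hfaithful hEcont s hscont
end
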